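/- arXiv:math/0605595 — 3 statements merged into one kernel-verified Lean document; each statement's English description precedes it below -/
import Mathlib

section
/- Fix n ≥ 1, and for integers p, q ≥ 0 with p + q ≤ 2n define S_{p,q} ⊂ ℤ^{2n} as the set of weakly decreasing sequences λ_1 ≥ ... ≥ λ_{2n} such that λ_i = 0 for p < i ≤ 2n − q (i.e., at most p positive-position entries and at most q negative-position entries, with at least 2n − p − q zeros in the middle). Then for every weakly decreasing λ ∈ (2ℤ)^{2n}, there is exactly one even p with 0 ≤ p ≤ 2n and p + q = 2n+1 (where S_{p,q} for p+q = 2n+1 means the union of S_{s,t} over s ≤ p, t ≤ q, s+t ≤ 2n) such that λ − (p, p, ..., p) ∈ S_{p,q}. -/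
/-- For every weakly decreasing even sequence `λ₁ ≥ … ≥ λ_{2n}` (one-based indexing),
there is exactly one even `p` with `0 ≤ p ≤ 2n` such that
`λ_{p+1} ≤ p` and `λ_{p-1} ≥ p` (conventions `λ₀ = +∞`, `λ_{2n+1} = -∞`),
i.e. `λ - p·𝟙 ∈ S_{p, 2n+1-p}`. -/
theorem stmt_9 (n : ℕ) (hn : 1 ≤ n) (lam : ℕ → ℤ)
    (hanti : ∀ i j : ℕ, 1 ≤ i → i ≤ j → j ≤ 2 * n → lam j ≤ lam i)
    (heven : ∀ i : ℕ, 1 ≤ i → i ≤ 2 * n → Even (lam i)) :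
    ∃! p : ℕ, p ≤ 2 * n ∧ Even p ∧
      (p < 2 * n → lam (p + 1) ≤ (p : ℤ)) ∧
      (2 ≤ p → (p : ℤ) ≤ lam (p - 1)) := by
  classical
  -- uniqueness helper: two distinct even solutions contradict each other
  have key : ∀ a b : ℕ, b ≤ 2 * n → Even a → Even b →
      (a < 2 * n → lam (a + 1) ≤ (a : ℤ)) → (2 ≤ b → (b : ℤ) ≤ lam (b - 1)) →
      a < b → False := by
    rintro a b hb ⟨x, hx⟩ ⟨y, hy⟩ hA hB hab
    have hAa := hA (by omega)
    have hBb := hB (by omega)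
    have hle : lam (b - 1) ≤ lam (a + 1) :=
      hanti (a + 1) (b - 1) (by omega) (by omega) (by omega)
    omega
  have hP : ∃ k, k = n ∨ lam (2 * k + 1) ≤ (2 * k : ℤ) := ⟨n, Or.inl rfl⟩
  set k₀ := Nat.find hP with hk0
  have hspec := Nat.find_spec hP
  have hk0n : k₀ ≤ n := Nat.find_le (Or.inl rfl)
  have hcond : (2 * k₀ ≤ 2 * n ∧ Even (2 * k₀) ∧
      (2 * k₀ < 2 * n → lam (2 * k₀ + 1) ≤ ((2 * k₀ : ℕ) : ℤ)) ∧
      (2 ≤ 2 * k₀ → ((2 * k₀ : ℕ) : ℤ) ≤ lam (2 * k₀ - 1))) := by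
    refine ⟨by omega, ⟨k₀, by ring⟩, ?_, ?_⟩
    · intro hlt
      rcases hspec with h | h
      · omega
      · exact_mod_cast h
    · intro h2
      have hk1 : 1 ≤ k₀ := by omega
      have hmin := Nat.find_min hP (show k₀ - 1 < k₀ by omega)
      push_neg at hmin
      obtain ⟨hne, hgt⟩ := hmin
      have hidx : 2 * (k₀ - 1) + 1 = 2 * k₀ - 1 := by omega
      rw [hidx] at hgt
      have he := heven (2 * k₀ - 1) (by omega) (by omega)
      obtain ⟨m, hm⟩ := he
      omega
  refine ⟨2 * k₀, hcond, ?_⟩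
  rintro q ⟨hq, hqe, hqA, hqB⟩
  obtain ⟨_, hpe, hpA, hpB⟩ := hcond
  rcases lt_trichotomy q (2 * k₀) with h | h | h
  · exact absurd (key q (2 * k₀) (by omega) hqe hpe hqA hpB h) (by simp)
  · exact h
  · exact absurd (key (2 * k₀) q hq hpe hqe hpA hqB h) (by simp)
end

section
/- Let s be a symmetric unitary 2n × 2n complex matrix of the block form s = diag(k₁, k₂) · [[cos θ, −i sin θ], [−i sin θ, cos θ]] · diag(k₁ᵗ, k₂ᵗ), where k₁, k₂ ∈ U(n) and θ = diag(θ_1,...,θ_n) is real diagonal. Write det₁₂(s) for the determinant of the upper-right n × n block of s. Then conj(det₁₂(s)) = (−1)^n · det(s)^{−1} · det₁₂(s). -/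
open Matrix

private def sumProdEquiv (n : ℕ) : Fin n ⊕ Fin n ≃ Fin 2 × Fin n where
  toFun := Sum.elim (fun i => (0, i)) (fun i => (1, i))
  invFun p := if p.1 = 0 then Sum.inl p.2 else Sum.inr p.2
  left_inv x := by cases x <;> simp
  right_inv p := by
    obtain ⟨a, i⟩ := p
    fin_cases a <;> simp

private lemma det_fromBlocks_diag {n : ℕ} (a b c d : Fin n → ℂ) :
    (Matrix.fromBlocks (Matrix.diagonal a) (Matrix.diagonal b)
      (Matrix.diagonal c) (Matrix.diagonal d)).det
      = ∏ i, (a i * d i - b i * c i) := by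
  have h : Matrix.fromBlocks (Matrix.diagonal a) (Matrix.diagonal b)
      (Matrix.diagonal c) (Matrix.diagonal d)
      = (Matrix.blockDiagonal (fun i => !![a i, b i; c i, d i])).submatrix
          (sumProdEquiv n) (sumProdEquiv n) := by
    ext x y
    cases x <;> cases y <;>
      simp [sumProdEquiv, Matrix.blockDiagonal_apply, Matrix.diagonal_apply,
        eq_comm]
  rw [h, Matrix.det_submatrix_equiv_self, Matrix.det_blockDiagonal]
  simp [Matrix.det_fin_two_of]

/-- For `s` in generalized Cartan form
`s = diag(k₁,k₂) · [[cos θ, -i sin θ],[-i sin θ, cos θ]] · diag(k₁ᵗ,k₂ᵗ)`,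
one has `conj(det₁₂ s) = (-1)ⁿ · (det s)⁻¹ · det₁₂ s`. -/
theorem stmt_12 (n : ℕ) (k₁ k₂ : Matrix.unitaryGroup (Fin n) ℂ) (θ : Fin n → ℝ)
    (s : Matrix (Fin n ⊕ Fin n) (Fin n ⊕ Fin n) ℂ)
    (hs : s = Matrix.fromBlocks (k₁ : Matrix (Fin n) (Fin n) ℂ) 0 0
                (k₂ : Matrix (Fin n) (Fin n) ℂ) *
        Matrix.fromBlocks
          (Matrix.diagonal fun i => (Real.cos (θ i) : ℂ))
          (Matrix.diagonal fun i => -Complex.I * (Real.sin (θ i) : ℂ))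
          (Matrix.diagonal fun i => -Complex.I * (Real.sin (θ i) : ℂ))
          (Matrix.diagonal fun i => (Real.cos (θ i) : ℂ)) *
        Matrix.fromBlocks ((k₁ : Matrix (Fin n) (Fin n) ℂ))ᵀ 0 0
          ((k₂ : Matrix (Fin n) (Fin n) ℂ))ᵀ) :
    (starRingEnd ℂ) (s.toBlocks₁₂.det) = (-1) ^ n * (s.det)⁻¹ * s.toBlocks₁₂.det := by
  set K₁ : Matrix (Fin n) (Fin n) ℂ := (k₁ : Matrix (Fin n) (Fin n) ℂ) with hK₁
  set K₂ : Matrix (Fin n) (Fin n) ℂ := (k₂ : Matrix (Fin n) (Fin n) ℂ) with hK₂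
  set d₁ : ℂ := K₁.det with hd₁def
  set d₂ : ℂ := K₂.det with hd₂def
  have hd₁u : d₁ ∈ unitary ℂ := Matrix.det_of_mem_unitary k₁.2
  have hd₂u : d₂ ∈ unitary ℂ := Matrix.det_of_mem_unitary k₂.2
  have hd₁ : (starRingEnd ℂ) d₁ * d₁ = 1 := hd₁u.1
  have hd₂ : (starRingEnd ℂ) d₂ * d₂ = 1 := hd₂u.1
  set P : ℂ := ∏ i, (Real.sin (θ i) : ℂ) with hP
  -- the 1,2 block
  have hblock : s.toBlocks₁₂
      = K₁ * Matrix.diagonal (fun i => -Complex.I * (Real.sin (θ i) : ℂ)) * K₂ᵀ := by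
    rw [hs]
    simp [Matrix.fromBlocks_multiply, Matrix.toBlocks_fromBlocks₁₂, Matrix.mul_assoc]
  -- determinant of the middle factor
  have hmid : (Matrix.fromBlocks
          (Matrix.diagonal fun i => (Real.cos (θ i) : ℂ))
          (Matrix.diagonal fun i => -Complex.I * (Real.sin (θ i) : ℂ))
          (Matrix.diagonal fun i => -Complex.I * (Real.sin (θ i) : ℂ))
          (Matrix.diagonal fun i => (Real.cos (θ i) : ℂ))).det = 1 := by
    rw [det_fromBlocks_diag]
    have key : ∀ i : Fin n, ((Real.cos (θ i) : ℂ)) * ((Real.cos (θ i) : ℂ))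
        - (-Complex.I * (Real.sin (θ i) : ℂ)) * (-Complex.I * (Real.sin (θ i) : ℂ)) = 1 := by
      intro i
      have h : ((Real.sin (θ i) : ℂ)) ^ 2 + ((Real.cos (θ i) : ℂ)) ^ 2 = 1 := by
        have := Real.sin_sq_add_cos_sq (θ i)
        exact_mod_cast congrArg (Complex.ofReal) this
      linear_combination h - ((Real.sin (θ i) : ℂ)) ^ 2 * Complex.I_sq
    simp only [key, Finset.prod_const_one]
  -- determinant of s
  have hdet : s.det = (d₁ * d₂) ^ 2 := by
    rw [hs, Matrix.det_mul, Matrix.det_mul, hmid,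
      Matrix.det_fromBlocks_zero₁₂, Matrix.det_fromBlocks_zero₁₂,
      Matrix.det_transpose, Matrix.det_transpose]
    ring
  -- determinant of the 1,2 block
  have hdet12 : s.toBlocks₁₂.det = d₁ * d₂ * ((-Complex.I) ^ n * P) := by
    rw [hblock, Matrix.det_mul, Matrix.det_mul, Matrix.det_transpose,
      Matrix.det_diagonal, Finset.prod_mul_distrib, Finset.prod_const]
    simp only [Finset.card_univ, Fintype.card_fin, hP]
    ring
  have hconj12 : (starRingEnd ℂ) s.toBlocks₁₂.det
      = (starRingEnd ℂ) d₁ * (starRingEnd ℂ) d₂ * (Complex.I ^ n * P) := by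
    rw [hdet12]
    simp only [_root_.map_mul, map_pow, map_neg, Complex.conj_I, hP, map_prod, Complex.conj_ofReal]
    ring
  have hIn : (-1 : ℂ) ^ n * (-Complex.I) ^ n = Complex.I ^ n := by
    rw [← mul_pow]; ring_nf
  have hinv : ((d₁ * d₂) ^ 2)⁻¹ = ((starRingEnd ℂ) d₁ * (starRingEnd ℂ) d₂) ^ 2 := by
    refine inv_eq_of_mul_eq_one_left ?_
    calc ((starRingEnd ℂ) d₁ * (starRingEnd ℂ) d₂) ^ 2 * (d₁ * d₂) ^ 2
        = (((starRingEnd ℂ) d₁ * d₁) * ((starRingEnd ℂ) d₂ * d₂)) ^ 2 := by ring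
      _ = 1 := by rw [hd₁, hd₂, one_mul, one_pow]
  rw [hconj12, hdet, hdet12, hinv]
  calc (starRingEnd ℂ) d₁ * (starRingEnd ℂ) d₂ * (Complex.I ^ n * P)
      = (((starRingEnd ℂ) d₁ * d₁) * ((starRingEnd ℂ) d₂ * d₂))
          * ((starRingEnd ℂ) d₁ * (starRingEnd ℂ) d₂)
          * (((-1 : ℂ) ^ n * (-Complex.I) ^ n) * P) := by rw [hd₁, hd₂, hIn]; ring
    _ = (-1) ^ n * ((starRingEnd ℂ) d₁ * (starRingEnd ℂ) d₂) ^ 2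
          * (d₁ * d₂ * ((-Complex.I) ^ n * P)) := by ring
end

section
/- The function g ↦ ∏_{i=1}^n sech(λ_i(g))^{(2n+1)/2}, where λ_1(g),...,λ_n(g) are the Cartan KAK coordinates of g ∈ Sp(n,ℝ), is square-integrable on Sp(n,ℝ) with respect to Haar measure; equivalently, ∫_{λ ∈ ℝ^n, λ_1 ≥ ... ≥ λ_n ≥ 0} ∏_{i>j} sinh(λ_i−λ_j) sinh(λ_i+λ_j) · ∏_i sinh(2λ_i) · ∏_i sech(λ_i)^{2n+1} dλ < ∞. -/
/-!
The integrand is dominated on all of `ℝⁿ` by `∏ᵢ 2 sech λᵢ`. Indeed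
`sinh (λᵢ - λⱼ) sinh (λᵢ + λⱼ) = cosh² λᵢ - cosh² λⱼ` is at most `cosh² λᵢ cosh² λⱼ` in absolute
value, `|sinh 2λᵢ| ≤ 2 cosh² λᵢ`, and each `λᵢ` occurs in exactly `n - 1` root factors, so the
total growth `cosh^{2n} λᵢ` is beaten by `sech^{2n+1} λᵢ`. Finally `sech` is integrable on `ℝ`
because `cosh x ≥ 1 + x² / 2`.
-/

open MeasureTheory Finset Real

theorem Finset.prod_prod_filter_lt_mul {α M : Type*} [CommMonoid M] [Fintype α] [LinearOrder α]
    [LocallyFiniteOrderTop α] [LocallyFiniteOrderBot α] (b : α → M) :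
    ∏ i, ∏ j ∈ univ.filter (· < i), b i * b j = ∏ i, b i ^ (Fintype.card α - 1) := by
  classical
  have := prod_prod_Ioi_mul_eq_prod_prod_off_diag (fun j (i : α) => b i)
  simp only [prod_const, card_compl, card_singleton] at this
  rw [← this, prod_comm' (t' := univ) (s' := fun j => Ioi j) (by simp)]
  exact prod_congr rfl fun i _ => prod_congr rfl fun j _ => mul_comm _ _

namespace Real

theorem abs_sinh_le_cosh (x : ℝ) : |sinh x| ≤ cosh x :=
  abs_le_of_sq_le_sq (by nlinarith [cosh_sq x]) (cosh_pos x).le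

theorem sinh_sub_mul_sinh_add (x y : ℝ) :
    sinh (x - y) * sinh (x + y) = cosh x ^ 2 - cosh y ^ 2 := by
  rw [sinh_sub, sinh_add]
  linear_combination (sinh x ^ 2 + 1) * cosh_sq y - (sinh y ^ 2 + 1) * cosh_sq x

theorem abs_sinh_sub_mul_sinh_add_le (x y : ℝ) :
    |sinh (x - y) * sinh (x + y)| ≤ cosh x ^ 2 * cosh y ^ 2 := by
  have hx : 1 ≤ cosh x ^ 2 := one_le_pow₀ (one_le_cosh x)
  have hy : 1 ≤ cosh y ^ 2 := one_le_pow₀ (one_le_cosh y)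
  rw [sinh_sub_mul_sinh_add, abs_sub_le_iff]
  constructor <;> nlinarith

theorem abs_sinh_two_mul_le (x : ℝ) : |sinh (2 * x)| ≤ 2 * cosh x ^ 2 := by
  rw [sinh_two_mul, abs_mul, abs_mul, abs_two, abs_of_pos (cosh_pos x), sq, ← mul_assoc]
  gcongr
  exact abs_sinh_le_cosh x

theorem one_add_sq_div_two_le_cosh (x : ℝ) : 1 + x ^ 2 / 2 ≤ cosh x := by
  have h := sum_le_hasSum (range 2) (fun k _ => by rw [pow_mul]; positivity) (hasSum_cosh x)
  norm_num [sum_range_succ] at h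
  exact h

theorem integrable_inv_cosh : Integrable fun x : ℝ => (cosh x)⁻¹ := by
  refine (integrable_inv_one_add_sq.const_mul 2).mono' (by fun_prop) (ae_of_all _ fun x => ?_)
  have hc := one_add_sq_div_two_le_cosh x
  rw [norm_inv, norm_of_nonneg (cosh_pos x).le, ← div_eq_mul_inv, le_div_iff₀ (by positivity)]
  calc (cosh x)⁻¹ * (1 + x ^ 2) ≤ (cosh x)⁻¹ * (2 * cosh x) := by gcongr; linarith
    _ = 2 := by field_simp [(cosh_pos x).ne']

end Real

noncomputable def kakIntegrand (n : ℕ) (lam : Fin n → ℝ) : ℝ :=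
  (∏ i, ∏ j ∈ univ.filter (· < i), sinh (lam i - lam j) * sinh (lam i + lam j)) *
    (∏ i, sinh (2 * lam i)) * ∏ i, (1 / cosh (lam i)) ^ (2 * n + 1)

theorem abs_kakIntegrand_le {n : ℕ} (lam : Fin n → ℝ) :
    |kakIntegrand n lam| ≤ ∏ i, 2 * (cosh (lam i))⁻¹ := by
  have hroots : |∏ i, ∏ j ∈ univ.filter (· < i), sinh (lam i - lam j) * sinh (lam i + lam j)|
      ≤ ∏ i, (cosh (lam i) ^ 2) ^ (n - 1) := calc
    _ ≤ ∏ i, ∏ j ∈ univ.filter (· < i), cosh (lam i) ^ 2 * cosh (lam j) ^ 2 := by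
      simp_rw [abs_prod]
      gcongr with i _ j _
      exact abs_sinh_sub_mul_sinh_add_le _ _
    _ = ∏ i, (cosh (lam i) ^ 2) ^ (n - 1) := by
      rw [prod_prod_filter_lt_mul (fun i => cosh (lam i) ^ 2), Fintype.card_fin]
  have hlong : |∏ i, sinh (2 * lam i)| ≤ ∏ i, 2 * cosh (lam i) ^ 2 := by
    rw [abs_prod]
    gcongr with i _
    exact abs_sinh_two_mul_le _
  calc |kakIntegrand n lam|
      ≤ (∏ i, (cosh (lam i) ^ 2) ^ (n - 1)) * (∏ i, 2 * cosh (lam i) ^ 2) *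
          ∏ i, (1 / cosh (lam i)) ^ (2 * n + 1) := by
        have hsech : 0 ≤ ∏ i, (1 / cosh (lam i)) ^ (2 * n + 1) :=
          prod_nonneg fun i _ => pow_nonneg (one_div_nonneg.mpr (cosh_pos _).le) _
        rw [kakIntegrand, abs_mul, abs_mul, abs_of_nonneg hsech]
        gcongr
    _ = ∏ i, 2 * (cosh (lam i))⁻¹ := by
        rw [← prod_mul_distrib, ← prod_mul_distrib]
        refine prod_congr rfl fun i _ => ?_
        obtain ⟨m, rfl⟩ : ∃ m, n = m + 1 := ⟨n - 1, by have := i.pos; omega⟩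
        rw [add_tsub_cancel_right, one_div, inv_pow]
        field_simp [(cosh_pos (lam i)).ne']
        ring

/-- `|Λ|^{2n+1} ∈ L²(Sp(n,ℝ))`: in KAK coordinates the density of Haar measure times
`∏ᵢ sech(λᵢ)^{2n+1}` is integrable on the dominant cone `λ₁ ≥ … ≥ λₙ ≥ 0`. -/
theorem stmt_17 (n : ℕ) :
    MeasureTheory.IntegrableOn
      (fun lam : Fin n → ℝ =>
        (∏ i : Fin n, ∏ j ∈ Finset.univ.filter (fun j => j < i),
            Real.sinh (lam i - lam j) * Real.sinh (lam i + lam j)) *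
          (∏ i : Fin n, Real.sinh (2 * lam i)) *
          (∏ i : Fin n, (1 / Real.cosh (lam i)) ^ (2 * n + 1)))
      {lam : Fin n → ℝ | (∀ i j : Fin n, i ≤ j → lam j ≤ lam i) ∧ ∀ i, 0 ≤ lam i}
      volume := by
  have hdom : Integrable fun lam : Fin n → ℝ => ∏ i, 2 * (cosh (lam i))⁻¹ :=
    Integrable.fintype_prod fun _ => integrable_inv_cosh.const_mul 2
  have hmeas : Measurable (kakIntegrand n) := by unfold kakIntegrand; fun_prop
  exact (hdom.mono' hmeas.aestronglyMeasurable (ae_of_all _ abs_kakIntegrand_le)).integrableOn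
end
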